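/- arXiv:2111.11618 — 6 statements merged into one kernel-verified Lean document; each statement's English description precedes it below -/
import Mathlib

section
/- Let μ be an odd integer and n = u² − 2w² with u, w as above, n ≡ 1 mod 8. If the equation X² + Y² = ε·μ is solvable in ℚ₂ for ε = 1 or ε = −1, then X² + Y² = ε·u − √n is solvable in ℚ₂, where √n ∈ ℚ₂ is a fixed square root of n. -/
/-! With `σ = ε r`, so that `σ² = n = u² − 2w²`, the target is `ε (u − σ)`. Since `μ = u + w`,
the identity `(u + w)(u − σ) = a² + (a + w)²` with `a = (u − σ)/2` exhibits `μ (u − σ)` as a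
sum of two squares, over any field of characteristic `≠ 2`. Multiplying by `εμ = x² + y²` and
dividing by `μ²` gives `ε (u − σ)` as a sum of two squares. -/

theorem add_mul_sub_eq_sq_add_sq {K : Type*} [Field K] (h2 : (2 : K) ≠ 0) {u w s : K}
    (hs : s ^ 2 = u ^ 2 - 2 * w ^ 2) :
    (u + w) * (u - s) = ((u - s) / 2) ^ 2 + ((u - s) / 2 + w) ^ 2 := by
  field_simp
  linear_combination (-2 : K) * hs

theorem stmt_2_general (n : ℕ) (μ τ u w : ℤ) (hμ : Odd μ) (hu : u = 2 * μ - τ) (hw : w = τ - μ)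
    (hrep : (n : ℤ) = u ^ 2 - 2 * w ^ 2)
    (r : ℚ_[2]) (hr : r ^ 2 = (n : ℚ_[2]))
    (ε : ℤ) (hε : ε = 1 ∨ ε = -1)
    (hsol : ∃ x y : ℚ_[2], x ^ 2 + y ^ 2 = ((ε * μ : ℤ) : ℚ_[2])) :
    ∃ X Y : ℚ_[2], X ^ 2 + Y ^ 2 = (ε : ℚ_[2]) * (u : ℚ_[2]) - r := by
  obtain ⟨x, y, hxy⟩ := hsol
  have hμ0 : (μ : ℚ_[2]) ≠ 0 := Int.cast_ne_zero.mpr (by rintro rfl; simp at hμ)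
  have hμuw : (μ : ℚ_[2]) = u + w := by subst hu hw; push_cast; ring
  have hε2 : (ε : ℚ_[2]) ^ 2 = 1 := by rcases hε with rfl | rfl <;> norm_num
  have hσ : ((ε : ℚ_[2]) * r) ^ 2 = (u : ℚ_[2]) ^ 2 - 2 * (w : ℚ_[2]) ^ 2 := by
    rw [mul_pow, hε2, one_mul, hr]; exact_mod_cast hrep
  obtain ⟨p, q, hpq⟩ := sq_add_sq_mul hxy.symm (add_mul_sub_eq_sq_add_sq two_ne_zero hσ)
  refine ⟨p / μ, q / μ, ?_⟩
  rw [div_pow, div_pow, ← add_div, ← hpq, div_eq_iff (pow_ne_zero 2 hμ0), ← hμuw]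
  push_cast
  linear_combination (-(μ : ℚ_[2]) ^ 2 * r) * hε2

/-- if `X² + Y² = ε·μ` is solvable in `ℚ₂` (ε = ±1), then so is
`X² + Y² = ε·u − √n`. -/
theorem stmt_2 (n : ℕ) (hn : Squarefree n) (hpos : 0 < n) (hn8 : n % 8 = 1)
    (μ τ u w : ℤ) (hμ : Odd μ) (hu : u = 2 * μ - τ) (hw : w = τ - μ)
    (hrep : (n : ℤ) = u ^ 2 - 2 * w ^ 2)
    (r : ℚ_[2]) (hr : r ^ 2 = (n : ℚ_[2]))
    (ε : ℤ) (hε : ε = 1 ∨ ε = -1)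
    (hsol : ∃ x y : ℚ_[2], x ^ 2 + y ^ 2 = ((ε * μ : ℤ) : ℚ_[2])) :
    ∃ X Y : ℚ_[2], X ^ 2 + Y ^ 2 = (ε : ℚ_[2]) * (u : ℚ_[2]) - r :=
  stmt_2_general n μ τ u w hμ hu hw hrep r hr ε hε hsol
end

section
/- Let n = a² + 8b² be square-free with all prime factors ≡ 1 (mod 8), a, b ∈ ℤ, a odd. Then the Jacobi symbol (a/n) equals (−1)^((a²−1)/8), i.e., (a/n) = (2/|a|). -/
lemma mod8_of_prime_factors (n : ℕ) (hpos : 0 < n)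
    (hpf : ∀ q : ℕ, q.Prime → q ∣ n → q % 8 = 1) : n % 8 = 1 := by
  induction n using Nat.strong_induction_on with
  | _ n ih =>
    rcases eq_or_ne n 1 with rfl | h1
    · rfl
    · obtain ⟨p, pp, hpd⟩ := Nat.exists_prime_and_dvd h1
      obtain ⟨m, rfl⟩ := hpd
      have hm : 0 < m := Nat.pos_of_mul_pos_left (by rwa [mul_comm] at hpos)
      have hmlt : m < p * m := lt_mul_left hm pp.one_lt
      have hm8 : m % 8 = 1 := ih m hmlt hm
        (fun q hq hqd => hpf q hq (hqd.mul_left p))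
      have hp8 : p % 8 = 1 := hpf p pp ⟨m, rfl⟩
      have h := Nat.mul_mod p m 8
      rw [hp8, hm8] at h
      omega

lemma even_aux (m r : ℕ) (h : m % 8 = r) (hr2 : r * r % 16 = 1) :
    Even ((m ^ 2 - 1) / 8) := by
  obtain ⟨q, hq⟩ : ∃ q, m = 8 * q + r := ⟨m / 8, by omega⟩
  have hx : m * m = 64 * (q * q) + 16 * (r * q) + r * r := by subst hq; ring
  rw [pow_two, Nat.even_iff]
  omega

lemma odd_aux (m r : ℕ) (h : m % 8 = r) (hr2 : r * r % 16 = 9) :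
    Odd ((m ^ 2 - 1) / 8) := by
  obtain ⟨q, hq⟩ : ∃ q, m = 8 * q + r := ⟨m / 8, by omega⟩
  have hx : m * m = 64 * (q * q) + 16 * (r * q) + r * r := by subst hq; ring
  rw [pow_two, Nat.odd_iff]
  omega

/-- `(a/n) = (−1)^((a²−1)/8) = (2/|a|)` for `n = a² + 8b²` squarefree
with all prime factors `≡ 1 mod 8` and `a` odd. -/
theorem stmt_4 (n : ℕ) (hn : Squarefree n) (hpos : 0 < n)
    (hpf : ∀ q : ℕ, q.Prime → q ∣ n → q % 8 = 1)
    (a b : ℤ) (ha : Odd a) (hrep : (n : ℤ) = a ^ 2 + 8 * b ^ 2) :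
    jacobiSym a n = (-1 : ℤ) ^ ((a.natAbs ^ 2 - 1) / 8) ∧
    jacobiSym a n = jacobiSym 2 a.natAbs := by
  set m : ℕ := a.natAbs with hm
  have hmodd : Odd m := Int.natAbs_odd.mpr ha
  have hnodd : Odd n := by
    have := mod8_of_prime_factors n hpos hpf
    exact Nat.odd_iff.mpr (by omega)
  have hn8 : n % 8 = 1 := mod8_of_prime_factors n hpos hpf
  have hn4 : n % 4 = 1 := by omega
  -- coprimality of 2b and m
  have hcop : Int.gcd (2 * b) (m : ℤ) = 1 := by
    by_contra hg
    obtain ⟨p, pp, hpd⟩ := Nat.exists_prime_and_dvd hg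
    have hp1 : (p : ℤ) ∣ 2 * b :=
      Int.natAbs_dvd_natAbs.mp (by simpa using hpd.trans (Nat.gcd_dvd_left _ _))
    have hpa : (p : ℤ) ∣ a :=
      Int.natAbs_dvd_natAbs.mp (by simpa using hpd.trans (Nat.gcd_dvd_right _ _))
    have hpm : p ∣ m := by simpa using hpd.trans (Nat.gcd_dvd_right _ _)
    have hpodd : p ≠ 2 := by
      rintro rfl
      exact (Nat.not_odd_iff_even.mpr (even_iff_two_dvd.mpr hpm)) hmodd
    have hpb : (p : ℤ) ∣ b := by
      rcases (Nat.prime_iff_prime_int.mp pp).2.2 2 b hp1 with h2 | hb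
      · exact absurd (by exact_mod_cast h2 : (p : ℕ) ∣ 2)
          (fun h => hpodd ((Nat.prime_dvd_prime_iff_eq pp Nat.prime_two).mp h))
      · exact hb
    have hsq : (p : ℤ) * p ∣ (n : ℤ) := by
      rw [hrep]
      exact dvd_add (by rw [sq]; exact mul_dvd_mul hpa hpa)
        (Dvd.dvd.mul_left (by rw [sq]; exact mul_dvd_mul hpb hpb) 8)
    have : p * p ∣ n := by exact_mod_cast hsq
    exact pp.not_isUnit (hn p this)
  have hcopb : Int.gcd b (m : ℤ) = 1 := Nat.Coprime.coprime_dvd_left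
    (by simpa using (dvd_mul_left b 2).natAbs) hcop
  -- step 1: remove the sign of a
  have h1 : jacobiSym a n = jacobiSym (m : ℤ) n := by
    rcases Int.natAbs_eq a with h | h
    · conv_lhs => rw [h]
    · conv_lhs => rw [h]
      rw [jacobiSym.neg _ hnodd, ZMod.χ₄_nat_one_mod_four hn4, one_mul]
  -- step 2: reciprocity
  have h2 : jacobiSym (m : ℤ) n = jacobiSym (n : ℤ) m :=
    jacobiSym.quadratic_reciprocity_one_mod_four' hmodd hn4
  -- step 3: n ≡ 8b² mod m
  have h3 : jacobiSym (n : ℤ) m = jacobiSym (8 * b ^ 2) m := by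
    apply jacobiSym.mod_left'
    obtain ⟨c, hc⟩ : (m : ℤ) ∣ a ^ 2 := dvd_pow (Int.natAbs_dvd.mpr dvd_rfl) two_ne_zero
    conv_lhs => rw [hrep, hc, add_comm]
    rw [Int.add_mul_emod_self_left]
  -- step 4: 8b² = 2 * (2b)²
  have h4 : jacobiSym (8 * b ^ 2) m = jacobiSym 2 m := by
    have : (8 * b ^ 2 : ℤ) = 2 * (2 * b) ^ 2 := by ring
    rw [this, jacobiSym.mul_left, jacobiSym.sq_one' hcop, mul_one]
  have key : jacobiSym a n = jacobiSym 2 m := by rw [h1, h2, h3, h4]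
  refine ⟨?_, key⟩
  rw [key, jacobiSym.at_two hmodd, ZMod.χ₈_nat_eq_if_mod_eight]
  have h8 : m % 8 = 1 ∨ m % 8 = 3 ∨ m % 8 = 5 ∨ m % 8 = 7 := by
    have := Nat.odd_iff.mp hmodd; omega
  obtain ⟨q, r, hq, hr⟩ : ∃ q r, m = 8 * q + r ∧ r = m % 8 := ⟨m / 8, m % 8, by omega, rfl⟩
  have hgoal : ∀ r : ℕ, m % 8 = r → r * r % 16 = 1 →
      Even ((m ^ 2 - 1) / 8) := fun r h hr2 => even_aux m r h hr2
  have hgoal' : ∀ r : ℕ, m % 8 = r → r * r % 16 = 9 →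
      Odd ((m ^ 2 - 1) / 8) := fun r h hr2 => odd_aux m r h hr2
  rcases h8 with h | h | h | h <;> rw [h, Nat.odd_iff.mp hmodd] <;> norm_num
  · exact ((hgoal 1 h (by norm_num)).neg_one_pow).symm
  · exact ((hgoal' 3 h (by norm_num)).neg_one_pow).symm
  · exact ((hgoal' 5 h (by norm_num)).neg_one_pow).symm
  · exact ((hgoal 7 h (by norm_num)).neg_one_pow).symm
end

section
/- Let n' be an odd positive integer and suppose n' = u² − 2w² for integers u, w with w ≠ 0. Let w' be the positive odd part of w. Then the Jacobi symbol (w/n') satisfies (w'/n')·(n'/w') = 1 when all prime factors of n' are ≡ 1 mod 8, and (n'/w') = (u²/w') = 1; hence (w/n') = 1. -/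
/-!
Every prime factor of `n'` is `1 mod 8`, hence so is `n'`, and both `-1` and `2` are squares
modulo `n'`; thus `(w/n') = (w'/n')`. Reciprocity holds without sign since `n' ≡ 1 mod 4`,
so `(w'/n') = (n'/w')`, and modulo `w' ∣ w` we have `n' ≡ u²` with `u` prime to `w'`
(a common prime factor of `u` and `w` would divide the squarefree `n'` twice), so `(n'/w') = 1`.
-/

theorem Nat.modEq_one_of_forall_prime_dvd {m n : ℕ} (hn : n ≠ 0)
    (h : ∀ p : ℕ, p.Prime → p ∣ n → p ≡ 1 [MOD m]) : n ≡ 1 [MOD m] := by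
  induction n using induction_on_primes with
  | zero => exact absurd rfl hn
  | one => rfl
  | prime_mul p a hp ih =>
    have ha : a ≠ 0 := right_ne_zero_of_mul hn
    simpa using (h p hp (dvd_mul_right p a)).mul
      (ih ha fun q hq hqa => h q hq (hqa.mul_left p))

theorem Int.isCoprime_of_squarefree_sq_sub_mul_sq {u w c : ℤ}
    (h : Squarefree (u ^ 2 - c * w ^ 2)) : IsCoprime u w := by
  set d : ℤ := (Int.gcd u w : ℤ)
  have hdu : d ∣ u := Int.gcd_dvd_left u w
  have hdw : d ∣ w := Int.gcd_dvd_right u w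
  have hdd : d * d ∣ u ^ 2 - c * w ^ 2 :=
    dvd_sub (by rw [sq]; exact mul_dvd_mul hdu hdu)
      (by rw [sq]; exact (mul_dvd_mul hdw hdw).mul_left c)
  rw [Int.isCoprime_iff_gcd_eq_one]
  exact Nat.isUnit_iff.mp (Int.ofNat_isUnit.mp (h d hdd))

theorem jacobiSym_sq_sub_mul_sq_of_dvd {u w c : ℤ} {b : ℕ} (hb : (b : ℤ) ∣ w)
    (huw : IsCoprime u w) : jacobiSym (u ^ 2 - c * w ^ 2) b = 1 := by
  have hmod : u ^ 2 - c * w ^ 2 ≡ u ^ 2 [ZMOD b] :=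
    (Int.modEq_iff_dvd.mpr (by simpa using (dvd_pow hb two_ne_zero).mul_left c)).symm
  rw [jacobiSym.mod_left' hmod]
  exact jacobiSym.sq_one' (Int.isCoprime_iff_gcd_eq_one.mp (huw.of_isCoprime_of_dvd_right hb))

theorem jacobiSym_eq_jacobiSym_ordCompl_two {n : ℕ} (hn : n % 8 = 1) (w : ℤ) :
    jacobiSym w n = jacobiSym (ordCompl[2] w.natAbs : ℕ) n := by
  have hodd : Odd n := Nat.odd_iff.mpr (by omega)
  have hneg : jacobiSym (-1) n = 1 := by
    rw [jacobiSym.at_neg_one hodd]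
    exact ZMod.χ₄_nat_one_mod_four (by omega)
  have htwo : jacobiSym 2 n = 1 := by
    rw [jacobiSym.at_two hodd, ZMod.χ₈_nat_eq_if_mod_eight]
    simp [hn, show n % 2 = 1 by omega]
  have hnat (k : ℕ) : jacobiSym k n = jacobiSym (ordCompl[2] k : ℕ) n := by
    conv_lhs => rw [← Nat.ordProj_mul_ordCompl_eq_self k 2]
    push_cast
    rw [jacobiSym.mul_left, jacobiSym.pow_left, htwo, one_pow, one_mul]
  obtain ⟨k, rfl | rfl⟩ := Int.eq_nat_or_neg w
  · rw [Int.natAbs_natCast, hnat]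
  · rw [Int.natAbs_neg, Int.natAbs_natCast, jacobiSym.neg _ hodd, ← jacobiSym.at_neg_one hodd,
      hneg, one_mul, hnat]

theorem stmt_7_general (n' : ℕ) (hpos : 0 < n') (hsf : Squarefree n')
    (hpf : ∀ q : ℕ, q.Prime → q ∣ n' → q % 8 = 1)
    (u w : ℤ) (hw : w ≠ 0) (hrep : (n' : ℤ) = u ^ 2 - 2 * w ^ 2) :
    jacobiSym ((ordCompl[2] w.natAbs : ℕ) : ℤ) n' *
      jacobiSym (n' : ℤ) (ordCompl[2] w.natAbs) = 1 ∧
    jacobiSym (n' : ℤ) (ordCompl[2] w.natAbs) = 1 ∧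
    jacobiSym w n' = 1 := by
  set w' : ℕ := ordCompl[2] w.natAbs
  have hn8 : n' % 8 = 1 := Nat.modEq_one_of_forall_prime_dvd hpos.ne' hpf
  have hw'w : (w' : ℤ) ∣ w := Int.natCast_dvd.mpr (Nat.ordCompl_dvd _ _)
  have hw'odd : Odd w' :=
    Nat.odd_iff.mpr (Nat.two_dvd_ne_zero.mp (Nat.not_dvd_ordCompl Nat.prime_two (by simpa)))
  have huw : IsCoprime u w :=
    Int.isCoprime_of_squarefree_sq_sub_mul_sq (hrep ▸ Int.squarefree_natCast.mpr hsf)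
  have hn'w' : jacobiSym n' w' = 1 := hrep ▸ jacobiSym_sq_sub_mul_sq_of_dvd hw'w huw
  have hw'n' : jacobiSym w' n' = 1 := by
    rwa [← jacobiSym.quadratic_reciprocity_one_mod_four (by omega) hw'odd]
  exact ⟨by rw [hw'n', hn'w', one_mul], hn'w',
    by rw [jacobiSym_eq_jacobiSym_ordCompl_two hn8, hw'n']⟩

/-- for `n' = u² − 2w²` odd positive squarefree with all prime
factors `≡ 1 mod 8` and `w ≠ 0`, with `w'` the positive odd part of `w`:
`(w'/n')·(n'/w') = 1`, `(n'/w') = 1`, hence `(w/n') = 1`. -/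
theorem stmt_7 (n' : ℕ) (hodd : Odd n') (hpos : 0 < n') (hsf : Squarefree n')
    (hpf : ∀ q : ℕ, q.Prime → q ∣ n' → q % 8 = 1)
    (u w : ℤ) (hw : w ≠ 0) (hrep : (n' : ℤ) = u ^ 2 - 2 * w ^ 2) :
    jacobiSym ((ordCompl[2] w.natAbs : ℕ) : ℤ) n' *
      jacobiSym (n' : ℤ) (ordCompl[2] w.natAbs) = 1 ∧
    jacobiSym (n' : ℤ) (ordCompl[2] w.natAbs) = 1 ∧
    jacobiSym w n' = 1 :=
  stmt_7_general n' hpos hsf hpf u w hw hrep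
end

section
/- Let A be a k×k matrix over 𝔽₂ with A·𝟏 = 0, and let D be a diagonal k×k matrix over 𝔽₂ with all diagonal entries equal to 1 (i.e., D = I). Consider the 2k×2k block matrix M = [[Aᵀ, I], [0, A]] over 𝔽₂. Then dim ker M ≥ 2, and dim ker M = 2 if and only if rank(A) = k − 1. -/
open Matrix
/-- for `M = [[Aᵀ, D],[0, A]]` with `D` diagonal, `A𝟏 = 0` and
`Aᵀ𝟏 = D𝟏`, one has `dim ker M ≥ 2`, with equality iff `rank A = k − 1`. -/
theorem stmt_9 (k : ℕ) (hk : 0 < k) (A D : Matrix (Fin k) (Fin k) (ZMod 2))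
    (hD : D.IsDiag) (hA1 : A.mulVec 1 = 0) (hcol : Aᵀ.mulVec 1 = D.mulVec 1) :
    2 ≤ Module.finrank (ZMod 2)
        (LinearMap.ker (Matrix.fromBlocks Aᵀ D 0 A).mulVecLin) ∧
    (Module.finrank (ZMod 2)
        (LinearMap.ker (Matrix.fromBlocks Aᵀ D 0 A).mulVecLin) = 2 ↔
      A.rank = k - 1) := by
  classical
  haveI : Fact (Nat.Prime 2) := ⟨Nat.prime_two⟩
  -- char-2 helper
  have key : ∀ a b : Fin k → ZMod 2, a + b = 0 ↔ a = b := by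
    intro a b
    constructor
    · intro h
      funext i
      have h' : a i + b i = 0 := congrFun h i
      have : a i = -b i := eq_neg_of_add_eq_zero_left h'
      rwa [CharTwo.neg_eq] at this
    · intro h
      subst h
      funext i
      exact CharTwo.add_self_eq_zero _
  set K := LinearMap.ker (Matrix.fromBlocks Aᵀ D 0 A).mulVecLin with hKdef
  -- membership in the kernel
  have hmem : ∀ v : (Fin k ⊕ Fin k → ZMod 2),
      v ∈ K ↔ Aᵀ.mulVec (v ∘ Sum.inl) = D.mulVec (v ∘ Sum.inr) ∧
        A.mulVec (v ∘ Sum.inr) = 0 := by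
    intro v
    rw [hKdef, LinearMap.mem_ker, Matrix.mulVecLin_apply, Matrix.fromBlocks_mulVec,
      Matrix.zero_mulVec, zero_add]
    constructor
    · intro h
      have h1 : Aᵀ.mulVec (v ∘ Sum.inl) + D.mulVec (v ∘ Sum.inr) = 0 :=
        funext fun i => congrFun h (Sum.inl i)
      have h2 : A.mulVec (v ∘ Sum.inr) = 0 :=
        funext fun i => congrFun h (Sum.inr i)
      exact ⟨(key _ _).1 h1, h2⟩
    · rintro ⟨h1, h2⟩
      funext i
      cases i with
      | inl i =>
        have := congrFun ((key _ _).2 h1) i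
        simpa using this
      | inr i => simpa using congrFun h2 i
  -- the projection onto the second block
  set φ : K →ₗ[ZMod 2] (Fin k → ZMod 2) :=
    (LinearMap.funLeft (ZMod 2) (ZMod 2) Sum.inr).comp K.subtype with hφdef
  have hφapp : ∀ v : K, φ v = (v : Fin k ⊕ Fin k → ZMod 2) ∘ Sum.inr := fun v => rfl
  -- the kernel of φ is isomorphic to ker Aᵀ
  have hψmem : ∀ v : LinearMap.ker φ,
      ((LinearMap.funLeft (ZMod 2) (ZMod 2) Sum.inl).comp
        (K.subtype.comp (LinearMap.ker φ).subtype)) v ∈ LinearMap.ker Aᵀ.mulVecLin := by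
    intro v
    rw [LinearMap.mem_ker, Matrix.mulVecLin_apply]
    have h1 := ((hmem _).1 ((v : K)).2).1
    have h2 : ((v : K) : Fin k ⊕ Fin k → ZMod 2) ∘ Sum.inr = 0 := v.2
    have : ((LinearMap.funLeft (ZMod 2) (ZMod 2) Sum.inl).comp
        (K.subtype.comp (LinearMap.ker φ).subtype)) v
        = ((v : K) : Fin k ⊕ Fin k → ZMod 2) ∘ Sum.inl := rfl
    rw [this, h1, h2, Matrix.mulVec_zero]
  set ψ : (LinearMap.ker φ) →ₗ[ZMod 2] (LinearMap.ker Aᵀ.mulVecLin) :=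
    LinearMap.codRestrict _ _ hψmem with hψdef
  have hψapp : ∀ v : LinearMap.ker φ,
      (ψ v : Fin k → ZMod 2) = ((v : K) : Fin k ⊕ Fin k → ZMod 2) ∘ Sum.inl :=
    fun v => rfl
  have hψbij : Function.Bijective ψ := by
    constructor
    · intro v w hvw
      apply Subtype.ext
      apply Subtype.ext
      have hv2 : ((v : K) : Fin k ⊕ Fin k → ZMod 2) ∘ Sum.inr = 0 := v.2
      have hw2 : ((w : K) : Fin k ⊕ Fin k → ZMod 2) ∘ Sum.inr = 0 := w.2
      have h1 : ((v : K) : Fin k ⊕ Fin k → ZMod 2) ∘ Sum.inl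
          = ((w : K) : Fin k ⊕ Fin k → ZMod 2) ∘ Sum.inl := by
        rw [← hψapp, ← hψapp, hvw]
      funext i
      cases i with
      | inl i => exact congrFun h1 i
      | inr i => rw [show ((v : K) : Fin k ⊕ Fin k → ZMod 2) (Sum.inr i) = 0 from
          congrFun hv2 i, show ((w : K) : Fin k ⊕ Fin k → ZMod 2) (Sum.inr i) = 0 from
          congrFun hw2 i]
    · intro x
      have hx : Aᵀ.mulVec (x : Fin k → ZMod 2) = 0 := x.2
      have hmemK : Sum.elim (x : Fin k → ZMod 2) 0 ∈ K := by
        rw [hmem]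
        refine ⟨?_, ?_⟩ <;> simp [hx]
      have hmemφ : (⟨Sum.elim (x : Fin k → ZMod 2) 0, hmemK⟩ : K) ∈ LinearMap.ker φ := by
        rw [LinearMap.mem_ker, hφapp]
        simp
      refine ⟨⟨⟨Sum.elim (x : Fin k → ZMod 2) 0, hmemK⟩, hmemφ⟩, ?_⟩
      apply Subtype.ext
      rw [hψapp]
      simp
  have e : (LinearMap.ker Aᵀ.mulVecLin) ≃ₗ[ZMod 2] (LinearMap.ker φ) :=
    (LinearEquiv.ofBijective ψ hψbij).symm
  -- the range of φ
  set S : Submodule (ZMod 2) (Fin k → ZMod 2) :=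
    LinearMap.ker A.mulVecLin ⊓ (LinearMap.range Aᵀ.mulVecLin).comap D.mulVecLin with hSdef
  have hrange : LinearMap.range φ = S := by
    ext y
    constructor
    · rintro ⟨v, rfl⟩
      have h := (hmem _).1 v.2
      rw [hSdef]
      refine ⟨?_, ?_⟩
      · simpa [Matrix.mulVecLin_apply, hφapp] using h.2
      · exact ⟨(v : Fin k ⊕ Fin k → ZMod 2) ∘ Sum.inl, by
          show Aᵀ.mulVec _ = D.mulVecLin (φ v)
          rw [hφapp, h.1]; rfl⟩
    · intro hy
      rw [hSdef] at hy
      obtain ⟨hy1, x, hx⟩ := hy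
      have hy1' : A.mulVec y = 0 := hy1
      have hx' : Aᵀ.mulVec x = D.mulVec y := hx
      refine ⟨⟨Sum.elim x y, ?_⟩, ?_⟩
      · rw [hmem]
        constructor
        · simpa using hx'
        · simpa using hy1'
      · rw [hφapp]
        simp
  -- rank–nullity computations
  have hKrn := LinearMap.finrank_range_add_finrank_ker φ
  rw [hrange] at hKrn
  have heq : Module.finrank (ZMod 2) (LinearMap.ker φ)
      = Module.finrank (ZMod 2) (LinearMap.ker Aᵀ.mulVecLin) := e.symm.finrank_eq
  have hA' := LinearMap.finrank_range_add_finrank_ker A.mulVecLin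
  have hAT := LinearMap.finrank_range_add_finrank_ker Aᵀ.mulVecLin
  rw [Module.finrank_fin_fun] at hA' hAT
  have hrA : Module.finrank (ZMod 2) (LinearMap.range A.mulVecLin) = A.rank := rfl
  have hrAT : Module.finrank (ZMod 2) (LinearMap.range Aᵀ.mulVecLin) = A.rank := by
    have := Matrix.rank_transpose A
    rw [← this]; rfl
  rw [hrA] at hA'
  rw [hrAT] at hAT
  -- the all-ones vector is a nonzero element of ker A and of S
  have hone : (1 : Fin k → ZMod 2) ≠ 0 := by
    intro h
    have := congrFun h ⟨0, hk⟩
    simp at this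
  have h1kerA : (1 : Fin k → ZMod 2) ∈ LinearMap.ker A.mulVecLin := by
    rw [LinearMap.mem_ker, Matrix.mulVecLin_apply, hA1]
  have h1S : (1 : Fin k → ZMod 2) ∈ S := by
    rw [hSdef]
    exact ⟨h1kerA, ⟨1, by show Aᵀ.mulVec 1 = D.mulVecLin 1; rw [hcol]; rfl⟩⟩
  have hSpos : 0 < Module.finrank (ZMod 2) S := by
    rw [Module.finrank_pos_iff_exists_ne_zero]
    exact ⟨⟨1, h1S⟩, by simpa [Submodule.mk_eq_zero] using hone⟩
  have hkerApos : 0 < Module.finrank (ZMod 2) (LinearMap.ker A.mulVecLin) := by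
    rw [Module.finrank_pos_iff_exists_ne_zero]
    exact ⟨⟨1, h1kerA⟩, by simpa [Submodule.mk_eq_zero] using hone⟩
  have hSle : Module.finrank (ZMod 2) S
      ≤ Module.finrank (ZMod 2) (LinearMap.ker A.mulVecLin) := by
    apply Submodule.finrank_mono
    rw [hSdef]
    exact inf_le_left
  have hkerATpos : 0 < Module.finrank (ZMod 2) (LinearMap.ker Aᵀ.mulVecLin) := by omega
  rw [heq] at hKrn
  constructor <;> omega
end

section
/- Let n ≡ 2 (mod 8) be square-free positive with odd part n' = p₁⋯p_k, all pᵢ ≡ ±1 (mod 8). Assuming Monsky's formula s₂(n) = 2k − rank(M_n) with M_n = [[Aᵀ + D₂, D₋₁],[D₂, A + D₂]] over 𝔽₂, and noting D₂ = 0 here, we have: s₂(n) = 2 if and only if rank(A) = k − 1, where A is the matrix with a_{ij} = [p_j/p_i] for i ≠ j and a_{ii} = [(n'/pᵢ)/pᵢ]. -/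
open scoped Classical
open Matrix

noncomputable def aLeg (a : ℤ) (p : ℕ) : ZMod 2 :=
  if IsSquare ((a : ZMod p)) then 0 else 1

lemma aLeg_of_eq_one {p : ℕ} [Fact p.Prime] {a : ℤ} (h : legendreSym p a = 1) :
    aLeg a p = 0 := by
  have ha : (a : ZMod p) ≠ 0 := by
    intro h0
    rw [(legendreSym.eq_zero_iff p a).mpr h0] at h; norm_num at h
  rw [aLeg, if_pos ((legendreSym.eq_one_iff p ha).mp h)]

lemma aLeg_of_eq_neg_one {p : ℕ} [Fact p.Prime] {a : ℤ} (h : legendreSym p a = -1) :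
    aLeg a p = 1 := by
  have ha : (a : ZMod p) ≠ 0 := by
    intro h0
    rw [(legendreSym.eq_zero_iff p a).mpr h0] at h; norm_num at h
  rw [aLeg, if_neg]
  intro hs
  rw [(legendreSym.eq_one_iff p ha).mpr hs] at h; norm_num at h

lemma aLeg_mul {p : ℕ} [Fact p.Prime] {a b : ℤ} (ha : ((a : ZMod p)) ≠ 0)
    (hb : ((b : ZMod p)) ≠ 0) : aLeg (a * b) p = aLeg a p + aLeg b p := by
  have hmul := legendreSym.mul p a b
  rcases legendreSym.eq_one_or_neg_one p ha with h1 | h1 <;>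
    rcases legendreSym.eq_one_or_neg_one p hb with h2 | h2 <;>
      rw [h1, h2] at hmul <;> norm_num at hmul
  · rw [aLeg_of_eq_one h1, aLeg_of_eq_one h2, aLeg_of_eq_one hmul]; decide
  · rw [aLeg_of_eq_one h1, aLeg_of_eq_neg_one h2, aLeg_of_eq_neg_one hmul]; decide
  · rw [aLeg_of_eq_neg_one h1, aLeg_of_eq_one h2, aLeg_of_eq_neg_one hmul]; decide
  · rw [aLeg_of_eq_neg_one h1, aLeg_of_eq_neg_one h2, aLeg_of_eq_one hmul]; decide

lemma aLeg_prod {p : ℕ} [Fact p.Prime] {ι : Type*} (s : Finset ι) (f : ι → ℤ)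
    (h : ∀ i ∈ s, ((f i : ZMod p)) ≠ 0) :
    aLeg (∏ i ∈ s, f i) p = ∑ i ∈ s, aLeg (f i) p := by
  classical
  induction s using Finset.induction_on with
  | empty => simp [aLeg]
  | @insert a s' hnotmem ih =>
    rw [Finset.prod_insert hnotmem, Finset.sum_insert hnotmem,
      aLeg_mul (h a (Finset.mem_insert_self a s')),
      ih fun i hi => h i (Finset.mem_insert_of_mem hi)]
    push_cast
    rw [Finset.prod_ne_zero_iff]
    exact fun i hi => h i (Finset.mem_insert_of_mem hi)

lemma aLeg_reciprocity {p q : ℕ} [hpf : Fact p.Prime] [hqf : Fact q.Prime]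
    (hp2 : p ≠ 2) (hq2 : q ≠ 2) (hpq : p ≠ q) :
    aLeg (p : ℤ) q + aLeg (q : ℤ) p =
      (if p % 4 = 3 then 1 else 0) * (if q % 4 = 3 then (1 : ZMod 2) else 0) := by
  have hpne : ((p : ℤ) : ZMod q) ≠ 0 := by
    push_cast
    rw [Ne, ZMod.natCast_eq_zero_iff]
    intro hdvd
    exact hpq ((Nat.prime_dvd_prime_iff_eq hqf.out hpf.out).mp hdvd).symm
  have hqne : ((q : ℤ) : ZMod p) ≠ 0 := by
    push_cast
    rw [Ne, ZMod.natCast_eq_zero_iff]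
    intro hdvd
    exact hpq ((Nat.prime_dvd_prime_iff_eq hpf.out hqf.out).mp hdvd)
  have hpodd : p % 2 = 1 := Nat.odd_iff.mp (hpf.out.odd_of_ne_two hp2)
  have hqodd : q % 2 = 1 := Nat.odd_iff.mp (hqf.out.odd_of_ne_two hq2)
  have hp4 : p % 4 = 1 ∨ p % 4 = 3 := by omega
  have hq4 : q % 4 = 1 ∨ q % 4 = 3 := by omega
  rcases hp4 with hp4 | hp4
  · have hrec := legendreSym.quadratic_reciprocity_one_mod_four hp4 hq2
    rcases legendreSym.eq_one_or_neg_one q hpne with h1 | h1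
    · rw [aLeg_of_eq_one h1, aLeg_of_eq_one (hrec.symm.trans h1), hp4]
      norm_num
    · rw [aLeg_of_eq_neg_one h1, aLeg_of_eq_neg_one (hrec.symm.trans h1), hp4]
      norm_num
      decide
  · rcases hq4 with hq4 | hq4
    · have hrec := legendreSym.quadratic_reciprocity_one_mod_four hq4 hp2
      rcases legendreSym.eq_one_or_neg_one p hqne with h1 | h1
      · rw [aLeg_of_eq_one (hrec.symm.trans h1), aLeg_of_eq_one h1, hq4]
        norm_num
      · rw [aLeg_of_eq_neg_one (hrec.symm.trans h1), aLeg_of_eq_neg_one h1, hq4]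
        norm_num
        decide
    · have hrec := legendreSym.quadratic_reciprocity_three_mod_four hp4 hq4
      rcases legendreSym.eq_one_or_neg_one q hpne with h1 | h1
      · rw [aLeg_of_eq_one h1, aLeg_of_eq_neg_one (by rw [h1] at hrec; linarith),
          hp4, hq4]; decide
      · rw [aLeg_of_eq_neg_one h1, aLeg_of_eq_one (by rw [h1] at hrec; linarith),
          hp4, hq4]; decide

lemma chi_mul {a b : ℕ} (ha : a % 2 = 1) (hb : b % 2 = 1) :
    (if (a * b) % 4 = 3 then (1 : ZMod 2) else 0) =
      (if a % 4 = 3 then 1 else 0) + (if b % 4 = 3 then (1 : ZMod 2) else 0) := by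
  have ha4 : a % 4 = 1 ∨ a % 4 = 3 := by omega
  have hb4 : b % 4 = 1 ∨ b % 4 = 3 := by omega
  have hab : (a * b) % 4 = (a % 4) * (b % 4) % 4 := Nat.mul_mod a b 4
  rcases ha4 with h | h <;> rcases hb4 with h' | h' <;>
    rw [h, h'] at hab <;> norm_num at hab <;> simp [h, h', hab, CharTwo.add_self_eq_zero]

lemma chi_prod {ι : Type*} (s : Finset ι) (f : ι → ℕ) (h : ∀ i ∈ s, f i % 2 = 1) :
    (if (∏ i ∈ s, f i) % 4 = 3 then (1 : ZMod 2) else 0) =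
      ∑ i ∈ s, (if f i % 4 = 3 then (1 : ZMod 2) else 0) := by
  classical
  induction s using Finset.induction_on with
  | empty => simp
  | @insert a s' hnotmem ih =>
    have hodd : (∏ i ∈ s', f i) % 2 = 1 := by
      have h1 : ∏ i ∈ s', (f i % 2) = 1 :=
        Finset.prod_eq_one fun i hi => h i (Finset.mem_insert_of_mem hi)
      rw [Finset.prod_nat_mod, h1]
    rw [Finset.prod_insert hnotmem, Finset.sum_insert hnotmem,
      chi_mul (h a (Finset.mem_insert_self a s')) hodd,
      ih fun i hi => h i (Finset.mem_insert_of_mem hi)]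


/-- assuming Monsky's formula, for `n = 2n' ≡ 2 mod 8` squarefree
with all prime factors of `n'` congruent to `±1 mod 8`, `s₂(n) = 2` iff
`rank A = k − 1`. -/
theorem stmt_13 (k : ℕ) (hk : 0 < k) (p : Fin k → ℕ) (hp : ∀ i, (p i).Prime)
    (hinj : Function.Injective p) (hpm : ∀ i, p i % 8 = 1 ∨ p i % 8 = 7)
    (n n' : ℕ) (hn' : n' = ∏ i, p i) (hn : n = 2 * n') (hn8 : n % 8 = 2)
    (A D2 Dm1 : Matrix (Fin k) (Fin k) (ZMod 2))
    (hA : ∀ i j, A i j =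
      if i = j then aLeg ((n' / p i : ℕ) : ℤ) (p i) else aLeg ((p j : ℤ)) (p i))
    (hD2 : ∀ i j, D2 i j = if i = j then aLeg 2 (p i) else 0)
    (hDm1 : ∀ i j, Dm1 i j = if i = j then aLeg (-1) (p i) else 0)
    (s2 : ℕ)
    (hMonsky : s2 = 2 * k - (Matrix.fromBlocks (Aᵀ + D2) Dm1 D2 (A + D2)).rank) :
    s2 = 2 ↔ A.rank = k - 1 := by
  have hodd : ∀ i, p i % 2 = 1 := fun i => by rcases hpm i with h | h <;> omega
  have hne2 : ∀ i, p i ≠ 2 := fun i => by have := hodd i; omega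
  have hppos : ∀ i, 0 < p i := fun i => (hp i).pos
  have hcast : ∀ i j, i ≠ j → ((p j : ℤ) : ZMod (p i)) ≠ 0 := by
    intro i j hij
    haveI := Fact.mk (hp i)
    push_cast
    rw [Ne, ZMod.natCast_eq_zero_iff]
    intro hdvd
    exact hij (hinj ((Nat.prime_dvd_prime_iff_eq (hp i) (hp j)).mp hdvd))
  -- D2 = 0
  have hD2zero : D2 = 0 := by
    ext i j
    rw [hD2]
    rcases eq_or_ne i j with rfl | hij
    · haveI := Fact.mk (hp i)
      have h3 : IsSquare (2 : ZMod (p i)) := (ZMod.exists_sq_eq_two_iff (hne2 i)).mpr (hpm i)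
      have hc : ((2 : ℤ) : ZMod (p i)) = 2 := by norm_cast
      simp [aLeg, hc, h3]
    · simp [hij]
  -- the function t
  set t : Fin k → ZMod 2 := fun i => if p i % 4 = 3 then 1 else 0 with ht
  -- diagonal via product
  have hdiv : ∀ i, ((n' / p i : ℕ) : ℤ) = ∏ j ∈ Finset.univ.erase i, (p j : ℤ) := by
    intro i
    have h1 : n' = p i * ∏ j ∈ Finset.univ.erase i, p j := by
      rw [hn', ← Finset.mul_prod_erase Finset.univ p (Finset.mem_univ i)]
    rw [h1, Nat.mul_div_cancel_left _ (hppos i)]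
    push_cast
    rfl
  have hdiag : ∀ i, A i i = ∑ j ∈ Finset.univ.erase i, aLeg (p j) (p i) := by
    intro i
    haveI := Fact.mk (hp i)
    rw [hA i i, if_pos rfl, hdiv i]
    exact aLeg_prod _ _ fun j hj => hcast i j (Finset.mem_erase.mp hj).1.symm
  have hoffdiag : ∀ i j, j ∈ Finset.univ.erase i → A i j = aLeg (p j) (p i) := by
    intro i j hj
    rw [hA i j, if_neg (Finset.mem_erase.mp hj).1.symm]
  -- row sums vanish
  have hrow : ∀ i, ∑ j, A i j = 0 := by
    intro i
    rw [← Finset.add_sum_erase Finset.univ _ (Finset.mem_univ i), hdiag i,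
      Finset.sum_congr rfl (hoffdiag i), CharTwo.add_self_eq_zero]
  set one : Fin k → ZMod 2 := fun _ => 1 with hone
  have hA1 : A.mulVec one = 0 := by
    funext i
    simp only [Matrix.mulVec, dotProduct, hone, mul_one, Pi.zero_apply]
    exact hrow i
  -- sum of t vanishes
  have hTsum : ∑ i, t i = 0 := by
    have h0 : (if n' % 4 = 3 then (1 : ZMod 2) else 0)
        = ∑ i, (if p i % 4 = 3 then (1 : ZMod 2) else 0) := by
      rw [hn']
      exact chi_prod _ _ fun i _ => hodd i
    have hn'4 : n' % 4 = 1 := by omega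
    rw [ht]
    rw [← h0, hn'4]
    norm_num
  -- column sums equal t
  have hmulself : ∀ x : ZMod 2, x * x = x := by decide
  have hcol : ∀ j, ∑ i, A i j = t j := by
    intro j
    rw [← Finset.add_sum_erase Finset.univ _ (Finset.mem_univ j), hdiag j]
    have h1 : ∑ i ∈ Finset.univ.erase j, A i j
        = ∑ i ∈ Finset.univ.erase j, aLeg (p j) (p i) :=
      Finset.sum_congr rfl fun i hi => by rw [hA i j, if_neg (Finset.mem_erase.mp hi).1]
    rw [h1, ← Finset.sum_add_distrib]
    have h2 : ∀ i ∈ Finset.univ.erase j,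
        aLeg (p i) (p j) + aLeg (p j) (p i) = t i * t j := by
      intro i hi
      haveI := Fact.mk (hp i); haveI := Fact.mk (hp j)
      exact aLeg_reciprocity (hne2 i) (hne2 j)
        fun h => (Finset.mem_erase.mp hi).1 (hinj h)
    rw [Finset.sum_congr rfl h2, ← Finset.sum_mul]
    have h4 : t j + ∑ i ∈ Finset.univ.erase j, t i = ∑ i, t i :=
      Finset.add_sum_erase Finset.univ _ (Finset.mem_univ j)
    rw [hTsum] at h4
    have h3 : ∑ i ∈ Finset.univ.erase j, t i = t j := by
      have h5 := CharTwo.add_eq_iff_eq_add.mp h4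
      rw [zero_add] at h5
      exact h5.symm
    rw [h3, hmulself]
  -- transpose relation
  have hAT1 : Aᵀ.mulVec one = Dm1.mulVec one := by
    funext j
    have hL : Aᵀ.mulVec one j = ∑ i, A i j := by
      simp [Matrix.mulVec, dotProduct, Matrix.transpose_apply, hone, mul_one]
    have hR : Dm1.mulVec one j = aLeg (-1) (p j) := by
      simp only [Matrix.mulVec, dotProduct, hone, mul_one]
      rw [Finset.sum_congr rfl fun i _ => hDm1 j i]
      simp
    rw [hL, hR, hcol j]
    haveI := Fact.mk (hp j)
    have hm1 : ((-1 : ℤ) : ZMod (p j)) = -1 := by push_cast; ring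
    simp only [aLeg, hm1, ZMod.exists_sq_eq_neg_one_iff, ht]
    by_cases h : p j % 4 = 3 <;> simp [h]
  -- linear algebra
  have hM : Matrix.fromBlocks (Aᵀ + D2) Dm1 D2 (A + D2)
      = Matrix.fromBlocks Aᵀ Dm1 0 A := by
    rw [hD2zero, add_zero, add_zero]
  rw [hM] at hMonsky
  set M := Matrix.fromBlocks Aᵀ Dm1 (0 : Matrix (Fin k) (Fin k) (ZMod 2)) A with hMdef
  set dK := Module.finrank (ZMod 2) (LinearMap.ker M.mulVecLin) with hdK
  set dA := Module.finrank (ZMod 2) (LinearMap.ker A.mulVecLin) with hdA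
  set dAT := Module.finrank (ZMod 2) (LinearMap.ker Aᵀ.mulVecLin) with hdAT
  have hrnM : M.rank + dK = 2 * k := by
    have h := LinearMap.finrank_range_add_finrank_ker M.mulVecLin
    rw [Module.finrank_pi, Fintype.card_sum, Fintype.card_fin] at h
    rw [show M.rank = Module.finrank (ZMod 2) (LinearMap.range M.mulVecLin) from rfl]
    omega
  have hrnA : A.rank + dA = k := by
    have h := LinearMap.finrank_range_add_finrank_ker A.mulVecLin
    rw [Module.finrank_pi, Fintype.card_fin] at h
    rw [show A.rank = Module.finrank (ZMod 2) (LinearMap.range A.mulVecLin) from rfl]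
    omega
  have hrnAT : Aᵀ.rank + dAT = k := by
    have h := LinearMap.finrank_range_add_finrank_ker Aᵀ.mulVecLin
    rw [Module.finrank_pi, Fintype.card_fin] at h
    rw [show Aᵀ.rank = Module.finrank (ZMod 2) (LinearMap.range Aᵀ.mulVecLin) from rfl]
    omega
  have hTr : Aᵀ.rank = A.rank := Matrix.rank_transpose A
  have i0 : Fin k := ⟨0, hk⟩
  have hone_ne : one ≠ 0 := by
    intro h
    have := congrFun h i0
    simp [hone] at this
  have honeker : one ∈ LinearMap.ker A.mulVecLin := by
    rw [LinearMap.mem_ker, Matrix.mulVecLin_apply]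
    exact hA1
  have hdA1 : 1 ≤ dA := by
    rcases Nat.eq_zero_or_pos dA with h0 | h0
    · exfalso
      have hbot : LinearMap.ker A.mulVecLin = ⊥ := Submodule.finrank_eq_zero.mp h0
      rw [hbot, Submodule.mem_bot] at honeker
      exact hone_ne honeker
    · exact h0
  -- Claim A : dAT + 1 ≤ dK
  obtain ⟨x, hxind⟩ := exists_linearIndependent_of_le_finrank
    (R := ZMod 2) (M := ↥(LinearMap.ker Aᵀ.mulVecLin)) (le_refl dAT)
  set xv : Fin dAT → (Fin k → ZMod 2) := fun i => (x i : Fin k → ZMod 2) with hxv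
  have hxv_ind : LinearIndependent (ZMod 2) xv :=
    hxind.map' (Submodule.subtype _) (Submodule.ker_subtype _)
  have hxv_ker : ∀ i, Aᵀ.mulVec (xv i) = 0 := by
    intro i
    have := (x i).2
    rw [LinearMap.mem_ker, Matrix.mulVecLin_apply] at this
    exact this
  set g : Fin (dAT + 1) → ((Fin k ⊕ Fin k) → ZMod 2) :=
    Fin.snoc (fun i => Sum.elim (xv i) 0) (Sum.elim one one) with hg
  have hgmem : ∀ i, g i ∈ LinearMap.ker M.mulVecLin := by
    intro i
    rw [LinearMap.mem_ker, Matrix.mulVecLin_apply]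
    refine Fin.lastCases ?_ ?_ i
    · rw [hg]
      simp only [Fin.snoc_last]
      rw [hMdef, Matrix.fromBlocks_mulVec, Sum.elim_comp_inl, Sum.elim_comp_inr, hAT1,
        Matrix.zero_mulVec, zero_add, hA1]
      funext s
      cases s with
      | inl a => simp [CharTwo.add_self_eq_zero]
      | inr a => rfl
    · intro i
      rw [hg]
      simp only [Fin.snoc_castSucc]
      rw [hMdef, Matrix.fromBlocks_mulVec, Sum.elim_comp_inl, Sum.elim_comp_inr, hxv_ker i,
        Matrix.mulVec_zero, Matrix.mulVec_zero, Matrix.zero_mulVec, add_zero]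
      funext s
      cases s <;> rfl
  have hgind : LinearIndependent (ZMod 2) g := by
    rw [Fintype.linearIndependent_iff]
    intro c hc
    have hclast : c (Fin.last dAT) = 0 := by
      have h1 := congrFun hc (Sum.inr i0)
      rw [Finset.sum_apply] at h1
      rw [Fin.sum_univ_castSucc] at h1
      simp only [hg, Fin.snoc_castSucc, Fin.snoc_last, Pi.smul_apply, Sum.elim_inr,
        smul_eq_mul, mul_zero, Finset.sum_const_zero, zero_add, hone, mul_one,
        Pi.zero_apply] at h1
      exact h1
    have hrest : ∀ i : Fin dAT, c i.castSucc = 0 := by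
      have h2 : ∑ i : Fin dAT, c i.castSucc • xv i = 0 := by
        funext j
        have h1 := congrFun hc (Sum.inl j)
        rw [Finset.sum_apply] at h1
        rw [Fin.sum_univ_castSucc] at h1
        simp only [hg, Fin.snoc_castSucc, Fin.snoc_last, Pi.smul_apply, Sum.elim_inl,
          smul_eq_mul, hclast, zero_mul, add_zero, Pi.zero_apply] at h1
        rw [Finset.sum_apply]
        simpa using h1
      exact fun i => Fintype.linearIndependent_iff.mp hxv_ind
        (fun i => c i.castSucc) h2 i
    intro i
    refine Fin.lastCases hclast hrest i
  have hclaimA : dAT + 1 ≤ dK := by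
    set g' : Fin (dAT + 1) → ↥(LinearMap.ker M.mulVecLin) :=
      fun i => ⟨g i, hgmem i⟩ with hg'
    have hg'ind : LinearIndependent (ZMod 2) g' := by
      apply LinearIndependent.of_comp (Submodule.subtype _)
      exact hgind
    have := hg'ind.fintype_card_le_finrank
    rwa [Fintype.card_fin] at this
  -- Claim B : dK ≤ dA + dAT
  set φ : ↥(LinearMap.ker M.mulVecLin) →ₗ[ZMod 2] (Fin k → ZMod 2) :=
    (LinearMap.funLeft (ZMod 2) (ZMod 2) Sum.inr).comp
      (LinearMap.ker M.mulVecLin).subtype with hφ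
  have hsplit : ∀ v : (Fin k ⊕ Fin k) → ZMod 2, v ∈ LinearMap.ker M.mulVecLin →
      (Aᵀ.mulVec (v ∘ Sum.inl) + Dm1.mulVec (v ∘ Sum.inr) = 0
        ∧ A.mulVec (v ∘ Sum.inr) = 0) := by
    intro v hv
    rw [LinearMap.mem_ker, Matrix.mulVecLin_apply] at hv
    have hv2 : M.mulVec (Sum.elim (v ∘ Sum.inl) (v ∘ Sum.inr)) = 0 := by
      rw [Sum.elim_comp_inl_inr]; exact hv
    rw [hMdef, Matrix.fromBlocks_mulVec] at hv2
    constructor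
    · funext j
      exact congrFun hv2 (Sum.inl j)
    · funext j
      have := congrFun hv2 (Sum.inr j)
      rw [Matrix.zero_mulVec] at this
      simpa using this
  have hrangeφ : LinearMap.range φ ≤ LinearMap.ker A.mulVecLin := by
    rintro y ⟨⟨v, hv⟩, rfl⟩
    rw [LinearMap.mem_ker, Matrix.mulVecLin_apply]
    exact (hsplit v hv).2
  have hrnφ := LinearMap.finrank_range_add_finrank_ker φ
  have hrange_le : Module.finrank (ZMod 2) (LinearMap.range φ) ≤ dA :=
    Submodule.finrank_mono hrangeφ
  set ψ : ↥(LinearMap.ker φ) →ₗ[ZMod 2] (Fin k → ZMod 2) :=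
    (LinearMap.funLeft (ZMod 2) (ZMod 2) Sum.inl).comp
      ((LinearMap.ker M.mulVecLin).subtype.comp (LinearMap.ker φ).subtype) with hψ
  have hψinj : Function.Injective ψ := by
    rw [← LinearMap.ker_eq_bot, eq_bot_iff]
    rintro ⟨⟨v, hvM⟩, hvφ⟩ hu
    rw [LinearMap.mem_ker] at hu
    rw [LinearMap.mem_ker] at hvφ
    have hinl : v ∘ Sum.inl = 0 := hu
    have hinr : v ∘ Sum.inr = 0 := hvφ
    have hv0 : v = 0 := by
      funext s
      cases s with
      | inl a => exact congrFun hinl a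
      | inr a => exact congrFun hinr a
    rw [Submodule.mem_bot]
    exact Subtype.ext (Subtype.ext hv0)
  have hrangeψ : LinearMap.range ψ ≤ LinearMap.ker Aᵀ.mulVecLin := by
    rintro y ⟨⟨⟨v, hvM⟩, hvφ⟩, rfl⟩
    rw [LinearMap.mem_ker, Matrix.mulVecLin_apply]
    rw [LinearMap.mem_ker] at hvφ
    have hinr : v ∘ Sum.inr = 0 := hvφ
    have h1 := (hsplit v hvM).1
    rw [hinr, Matrix.mulVec_zero, add_zero] at h1
    exact h1
  have hkerφ_le : Module.finrank (ZMod 2) (LinearMap.ker φ) ≤ dAT := by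
    rw [← LinearMap.finrank_range_of_inj hψinj]
    exact Submodule.finrank_mono hrangeψ
  have hclaimB : dK ≤ dA + dAT := by omega
  omega
end

section
/- Let n = p₁⋯p_k ≡ 1 (mod 8) square-free with all pᵢ ≡ 1 (mod 8), and write n = 2μ² − τ² with μ odd. Suppose rank(A) = k − 1 where A is the 𝔽₂-matrix a_{ij} = [p_j/p_i] (i≠j), a_{ii} = [(n/pᵢ)/pᵢ]. Then the equation A·d = b_μ (where b_μ = ([μ/p₁],…,[μ/p_k])ᵀ) is solvable over 𝔽₂ if and only if the Jacobi symbol (μ/n) = 1. -/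
open scoped Classical
open Matrix

lemma aLeg_pow {p : ℕ} [Fact p.Prime] {a : ℤ} (ha : ((a : ZMod p)) ≠ 0) :
    (-1 : ℤ) ^ (aLeg a p).val = legendreSym p a := by
  unfold aLeg
  split_ifs with hs
  · rw [(legendreSym.eq_one_iff p ha).mpr hs]
    norm_num [show (0 : ZMod 2).val = 0 from rfl]
  · rcases legendreSym.eq_one_or_neg_one p ha with h | h
    · exact absurd ((legendreSym.eq_one_iff p ha).mp h) hs
    · rw [h]
      norm_num [show (1 : ZMod 2).val = 1 from rfl]

lemma zmod2_sum_eq_zero_iff {ι : Type*} (s : Finset ι) (x : ι → ZMod 2) :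
    ∑ i ∈ s, x i = 0 ↔ (-1 : ℤ) ^ (∑ i ∈ s, (x i).val) = 1 := by
  rw [neg_one_pow_eq_one_iff_even (by norm_num : (-1 : ℤ) ≠ 1), even_iff_two_dvd,
    ← ZMod.natCast_eq_zero_iff, Nat.cast_sum]
  simp_rw [ZMod.natCast_zmod_val]

lemma legendre_prod {p : ℕ} [Fact p.Prime] {ι : Type*} (s : Finset ι) (g : ι → ℤ) :
    legendreSym p (∏ i ∈ s, g i) = ∏ i ∈ s, legendreSym p (g i) := by
  induction s using Finset.cons_induction with
  | empty => simp [legendreSym, Finset.prod_empty]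
  | cons a s ha ih => rw [Finset.prod_cons, Finset.prod_cons, legendreSym.mul, ih]

lemma jacobi_prod {ι : Type*} (s : Finset ι) (q : ι → ℕ) (fct : ∀ i, Fact (q i).Prime)
    (μ : ℤ) :
    jacobiSym μ (∏ i ∈ s, q i) = ∏ i ∈ s, @legendreSym (q i) (fct i) μ := by
  induction s using Finset.cons_induction with
  | empty => simp [jacobiSym.one_right]
  | cons a s ha ih =>
      rw [Finset.prod_cons, Finset.prod_cons]
      haveI h1 : NeZero (q a) := ⟨(fct a).out.pos.ne'⟩
      haveI h2 : NeZero (∏ i ∈ s, q i) :=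
        ⟨Finset.prod_ne_zero_iff.mpr fun i _ => (fct i).out.pos.ne'⟩
      rw [jacobiSym.mul_right, ih, ← @jacobiSym.legendreSym.to_jacobiSym (q a) (fct a)]

/-- for `n ≡ 1 mod 8` with all prime factors `≡ 1 mod 8`,
`n = 2μ² − τ²`, `μ` odd, and `rank A = k − 1`: `A·d = b_μ` is solvable over `𝔽₂`
iff the Jacobi symbol `(μ/n) = 1`. -/
theorem stmt_15 (k : ℕ) (p : Fin k → ℕ) (hp : ∀ i, (p i).Prime)
    (hinj : Function.Injective p) (hpm : ∀ i, p i % 8 = 1)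
    (n : ℕ) (hn : n = ∏ i, p i) (hn8 : n % 8 = 1)
    (μ τ : ℤ) (hμ : Odd μ) (hrep : (n : ℤ) = 2 * μ ^ 2 - τ ^ 2)
    (A : Matrix (Fin k) (Fin k) (ZMod 2))
    (hA : ∀ i j, A i j =
      if i = j then aLeg ((n / p i : ℕ) : ℤ) (p i) else aLeg ((p j : ℤ)) (p i))
    (hrank : A.rank = k - 1) :
    (∃ d : Fin k → ZMod 2, A.mulVec d = fun i => aLeg μ (p i)) ↔
      jacobiSym μ n = 1 := by
  haveI fct : ∀ i, Fact (p i).Prime := fun i => ⟨hp i⟩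
  haveI : Fact (Nat.Prime 2) := ⟨Nat.prime_two⟩
  -- degenerate case k = 0
  rcases Nat.eq_zero_or_pos k with hk0 | hk
  · subst hk0
    have hn1 : n = 1 := by simpa using hn
    constructor
    · intro _; rw [hn1]; exact jacobiSym.one_right μ
    · intro _; exact ⟨0, funext fun i => i.elim0⟩
  -- basic arithmetic facts
  have h4 : ∀ i, p i % 4 = 1 := fun i => by have := hpm i; omega
  have hne2 : ∀ i, p i ≠ 2 := fun i => by have := hpm i; omega
  set m : Fin k → ℕ := fun i => ∏ j ∈ Finset.univ.erase i, p j with hm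
  have hnm : ∀ i, n = p i * m i := fun i => by
    rw [hn, hm, ← Finset.mul_prod_erase _ _ (Finset.mem_univ i)]
  have hdiv : ∀ i, (n / p i : ℕ) = m i := fun i => by
    rw [hnm i, Nat.mul_div_cancel_left _ (hp i).pos]
  have hpndm : ∀ i, ¬ (p i ∣ m i) := by
    intro i hdvd
    obtain ⟨j, hj, hdj⟩ := ((hp i).prime.dvd_finset_prod_iff _).mp hdvd
    have : p i = p j := (Nat.prime_dvd_prime_iff_eq (hp i) (hp j)).mp hdj
    exact (Finset.ne_of_mem_erase hj) (hinj this).symm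
  have hnz_pj : ∀ i j, i ≠ j → (((p j : ℤ) : ZMod (p i))) ≠ 0 := by
    intro i j hij h
    rw [Int.cast_natCast, ZMod.natCast_eq_zero_iff] at h
    exact hij (hinj ((Nat.prime_dvd_prime_iff_eq (hp i) (hp j)).mp h))
  have hnz_m : ∀ i, (((m i : ℤ) : ZMod (p i))) ≠ 0 := by
    intro i h
    rw [Int.cast_natCast, ZMod.natCast_eq_zero_iff] at h
    exact hpndm i h
  have hnz_μ : ∀ i, ((μ : ZMod (p i))) ≠ 0 := by
    intro i h
    have hdμ : (p i : ℤ) ∣ μ := (ZMod.intCast_zmod_eq_zero_iff_dvd μ (p i)).mp h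
    have hpp : Prime (p i : ℤ) := Nat.prime_iff_prime_int.mp (hp i)
    have hdn : (p i : ℤ) ∣ (n : ℤ) := Int.natCast_dvd_natCast.mpr ⟨m i, hnm i⟩
    have hτ2 : (p i : ℤ) ∣ τ ^ 2 := by
      have : τ ^ 2 = 2 * μ ^ 2 - (n : ℤ) := by linarith [hrep]
      rw [this]
      exact dvd_sub (Dvd.dvd.mul_left (hdμ.pow (by norm_num)) 2) hdn
    have hτ : (p i : ℤ) ∣ τ := hpp.dvd_of_dvd_pow hτ2
    have hsq : (p i : ℤ) * (p i : ℤ) ∣ (n : ℤ) := by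
      rw [hrep]
      exact dvd_sub (Dvd.dvd.mul_left (mul_dvd_mul hdμ hdμ) 2|>.trans
        (by ring_nf; exact dvd_refl _)) (by have := mul_dvd_mul hτ hτ; ring_nf at this ⊢; exact this)
    have hsqn : p i * p i ∣ n := by
      rwa [← Nat.cast_mul, Int.natCast_dvd_natCast] at hsq
    rw [hnm i] at hsqn
    exact hpndm i ((Nat.mul_dvd_mul_iff_left (hp i).pos).mp hsqn)
  -- column sums of A vanish
  have colsum : ∀ j, ∑ i, A i j = 0 := by
    intro j
    rw [zmod2_sum_eq_zero_iff, ← Finset.prod_pow_eq_pow_sum]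
    rw [← Finset.mul_prod_erase _ _ (Finset.mem_univ j)]
    have hdiag : (-1 : ℤ) ^ (A j j).val = legendreSym (p j) ((m j : ℕ) : ℤ) := by
      rw [hA j j, if_pos rfl, hdiv j]
      exact aLeg_pow (hnz_m j)
    have hoff : ∀ i ∈ Finset.univ.erase j,
        (-1 : ℤ) ^ (A i j).val = legendreSym (p j) ((p i : ℕ) : ℤ) := by
      intro i hi
      have hij : i ≠ j := Finset.ne_of_mem_erase hi
      rw [hA i j, if_neg hij, aLeg_pow (hnz_pj i j hij)]
      exact legendreSym.quadratic_reciprocity_one_mod_four (h4 j) (hne2 i)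
    rw [hdiag, Finset.prod_congr rfl hoff, ← legendre_prod]
    have : (∏ i ∈ Finset.univ.erase j, ((p i : ℕ) : ℤ)) = ((m j : ℕ) : ℤ) := by
      rw [hm]; push_cast; ring
    rw [this, ← sq]
    exact legendreSym.sq_one (p j) (hnz_m j)
  -- sum characterization of b_μ
  have bsum : (∑ i, aLeg μ (p i) = 0) ↔ jacobiSym μ n = 1 := by
    rw [zmod2_sum_eq_zero_iff, ← Finset.prod_pow_eq_pow_sum]
    have : ∀ i ∈ Finset.univ, (-1 : ℤ) ^ (aLeg μ (p i)).val = legendreSym (p i) μ :=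
      fun i _ => aLeg_pow (hnz_μ i)
    rw [Finset.prod_congr rfl this, hn, jacobi_prod Finset.univ p fct μ]
  -- linear algebra
  set f : (Fin k → ZMod 2) →ₗ[ZMod 2] ZMod 2 := ∑ i, LinearMap.proj i with hf
  have hfapp : ∀ v : Fin k → ZMod 2, f v = ∑ i, v i := by
    intro v; rw [hf]; simp [LinearMap.proj]
  have hrange_le : LinearMap.range A.mulVecLin ≤ LinearMap.ker f := by
    rintro _ ⟨d, rfl⟩
    rw [LinearMap.mem_ker, hfapp, Matrix.mulVecLin_apply]
    have : ∀ i : Fin k, A.mulVec d i = ∑ j, A i j * d j := fun i => rfl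
    simp_rw [this]
    rw [Finset.sum_comm]
    refine Finset.sum_eq_zero fun j _ => ?_
    rw [← Finset.sum_mul, colsum j, zero_mul]
  have hsurj : Function.Surjective f := by
    intro c
    refine ⟨fun j => if j = ⟨0, hk⟩ then c else 0, ?_⟩
    rw [hfapp]
    simp [Finset.sum_ite_eq']
  have hker_rank : Module.finrank (ZMod 2) (LinearMap.ker f) = k - 1 := by
    have h1 := LinearMap.finrank_range_add_finrank_ker f
    rw [LinearMap.range_eq_top.mpr hsurj, finrank_top, Module.finrank_self] at h1
    have h2 : Module.finrank (ZMod 2) (Fin k → ZMod 2) = k := by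
      simp [Module.finrank_pi]
    omega
  have heq : LinearMap.range A.mulVecLin = LinearMap.ker f := by
    refine Submodule.eq_of_le_of_finrank_le hrange_le ?_
    have : Module.finrank (ZMod 2) (LinearMap.range A.mulVecLin) = k - 1 := hrank
    rw [hker_rank, this]
  constructor
  · rintro ⟨d, hd⟩
    have hmem : (fun i => aLeg μ (p i)) ∈ LinearMap.range A.mulVecLin :=
      ⟨d, by rw [Matrix.mulVecLin_apply, hd]⟩
    rw [heq, LinearMap.mem_ker, hfapp] at hmem
    exact bsum.mp hmem
  · intro hj
    have hmem : (fun i => aLeg μ (p i)) ∈ LinearMap.ker f := by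
      rw [LinearMap.mem_ker, hfapp]; exact bsum.mpr hj
    rw [← heq] at hmem
    obtain ⟨d, hd⟩ := hmem
    exact ⟨d, by rw [← Matrix.mulVecLin_apply]; exact hd⟩
end
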